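/- Suppose d = 2. Then the lower bound in the trade-off relation is sharp and attained by taking 𝒜' = 𝒜: the infimum over all orthonormal bases {a'_1, a'_2} of H of ε(𝒜,𝒜') + η(𝒜',ℬ) and the infimum over all orthonormal bases {a'_1, a'_2} of Δ(𝒜,𝒜',ℬ) are both equal to η(𝒜,ℬ) = |⟨a_1, b_1⟩| · √(1 − |⟨a_1, b_1⟩|²), and both infima are attained when a'_i = a_i for all i. -/

import Mathlib

open scoped ComplexInnerProductSpace

noncomputable section

variable {H : Type*} [NormedAddCommGroup H] [InnerProductSpace ℂ H] [FiniteDimensional ℂ H]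
variable {ι ι' : Type*} [Fintype ι] [Fintype ι']

/-- The rank-one projector `|v⟩⟨v|`. -/
def ketbra (v : H) : H →ₗ[ℂ] H where
  toFun x := ⟪v, x⟫ • v
  map_add' x y := by simp [inner_add_right, add_smul]
  map_smul' c x := by simp [inner_smul_right, mul_smul]

/-- A density operator: self-adjoint, positive semidefinite, trace one. -/
def IsDensity (ρ : H →ₗ[ℂ] H) : Prop :=
  LinearMap.IsSymmetric ρ ∧ (∀ x : H, 0 ≤ (⟪x, ρ x⟫).re) ∧
    LinearMap.trace ℂ H ρ = 1

/-- The state-dependent error `ε_ρ(𝒜,𝒜')`. -/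
def sdError (a a' : ι → H) (ρ : H →ₗ[ℂ] H) : ℝ :=
  ⨆ i : ι, ‖LinearMap.trace ℂ H (ρ ∘ₗ (ketbra (a i) - ketbra (a' i)))‖

/-- The state-independent error `ε(𝒜,𝒜')`. -/
def siError (a a' : ι → H) : ℝ :=
  ⨆ ρ : {ρ : H →ₗ[ℂ] H // IsDensity ρ}, sdError a a' ρ.1

/-- The operator `|b_i⟩⟨b_i| − Σ_j |⟨a'_j, b_i⟩|² |a'_j⟩⟨a'_j|`. -/
def distOp (a' : ι' → H) (b : ι → H) (i : ι) : H →ₗ[ℂ] H :=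
  ketbra (b i) - ∑ j : ι', (‖⟪a' j, b i⟫‖ ^ 2 : ℂ) • ketbra (a' j)

/-- The state-dependent disturbance `η_ρ(𝒜',ℬ)`. -/
def sdDist (a' : ι' → H) (b : ι → H) (ρ : H →ₗ[ℂ] H) : ℝ :=
  ⨆ i : ι, ‖LinearMap.trace ℂ H (ρ ∘ₗ distOp a' b i)‖

/-- The state-independent disturbance `η(𝒜',ℬ)`. -/
def siDist (a' : ι' → H) (b : ι → H) : ℝ :=
  ⨆ ρ : {ρ : H →ₗ[ℂ] H // IsDensity ρ}, sdDist a' b ρ.1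

/-- The state-independent overall error `Δ(𝒜,𝒜',ℬ)`. -/
def siOverall (a a' b : ι → H) : ℝ :=
  ⨆ ρ : {ρ : H →ₗ[ℂ] H // IsDensity ρ}, (sdError a a' ρ.1 + sdDist a' b ρ.1)

/-!
Write `α = ⟪a 0, b 0⟫` and `β = ⟪a 1, b 0⟫`, so that `‖α‖ ^ 2 + ‖β‖ ^ 2 = 1` and
`√(1 - ‖α‖ ^ 2) = ‖β‖`. In a qubit every state satisfies
`tr (ρ D₀) = 2 Re (conj α * β * ρ₀₁) = -tr (ρ D₁)` with `ρ₀₁ = ⟪a 0, ρ (a 1)⟫`, and positivity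
gives `2 ‖ρ₀₁‖ ≤ 1`; hence `η(𝒜, ℬ) = ‖α‖ ‖β‖`, attained by the pure state `(a 0 + ω a 1) / √2`
for a suitable phase `ω`, while `ε(𝒜, 𝒜) = 0`. That state has diagonal `(1/2, 1/2)` in the
basis `a`, and for such a state and any basis `a'` the disturbances of `𝒜` and `𝒜'` differ by
`(1 - 2 ‖⟪a' 0, b 0⟫‖ ^ 2)` times `tr (ρ (|a 0⟩⟨a 0| - |a' 0⟩⟨a' 0|))`, a factor in `[-1, 1]`
times an error term. So `ε_ρ + η_ρ ≥ ‖α‖ ‖β‖` for every `𝒜'`, which bounds both infima from below.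
-/

open scoped ComplexConjugate
open InnerProductSpace
open LinearMap (trace)

section General

variable {E : Type*} [NormedAddCommGroup E] [InnerProductSpace ℂ E] {κ κ' : Type*}

lemma ketbra_apply (v x : E) : ketbra v x = ⟪v, x⟫ • v := rfl

lemma trace_comp_ketbra [FiniteDimensional ℂ E] (T : E →ₗ[ℂ] E) (v : E) :
    trace ℂ E (T ∘ₗ ketbra v) = ⟪v, T v⟫ := by
  have : T ∘ₗ ketbra v = (rankOne ℂ (T v) v : E →L[ℂ] E) := by
    ext x
    simp [ketbra_apply]
  rw [this, trace_rankOne]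

lemma trace_comp_distOp [FiniteDimensional ℂ E] [Fintype κ'] (T : E →ₗ[ℂ] E) (a' : κ' → E)
    (b : κ → E) (i : κ) :
    trace ℂ E (T ∘ₗ distOp a' b i)
      = ⟪b i, T (b i)⟫ - ∑ j, (‖⟪a' j, b i⟫‖ ^ 2 : ℂ) * ⟪a' j, T (a' j)⟫ := by
  simp only [distOp, ← Module.End.mul_eq_comp, mul_sub, Finset.mul_sum, mul_smul_comm, map_sub,
    map_sum, map_smul]
  simp only [Module.End.mul_eq_comp, trace_comp_ketbra, smul_eq_mul]

lemma sum_trace_comp_distOp [FiniteDimensional ℂ E] [Fintype κ] [Fintype κ']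
    (T : E →ₗ[ℂ] E) (a' : OrthonormalBasis κ' ℂ E) (b : OrthonormalBasis κ ℂ E) :
    ∑ i, trace ℂ E (T ∘ₗ distOp a' b i) = 0 := by
  have hparseval (j : κ') : ∑ i, (‖⟪a' j, b i⟫‖ ^ 2 : ℂ) = 1 := by
    exact_mod_cast (b.sum_sq_norm_inner_left (a' j)).trans (by simp)
  simp_rw [trace_comp_distOp, Finset.sum_sub_distrib]
  rw [Finset.sum_comm, ← T.trace_eq_sum_inner b, T.trace_eq_sum_inner a']
  simp [← Finset.sum_mul, hparseval]

lemma isDensity_ketbra [FiniteDimensional ℂ E] {v : E} (hv : ‖v‖ = 1) : IsDensity (ketbra v) := by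
  refine ⟨fun x y => ?_, fun x => ?_, ?_⟩
  · simp only [ketbra_apply, inner_smul_left, inner_smul_right, inner_conj_symm]
    ring
  · rw [ketbra_apply, inner_smul_right, ← inner_conj_symm, Complex.conj_mul']
    norm_cast
    positivity
  · simpa [hv] using trace_comp_ketbra LinearMap.id v

lemma LinearMap.IsPositive.two_mul_norm_inner_le {T : E →ₗ[ℂ] E} (hT : T.IsPositive) (x y : E) :
    2 * ‖⟪x, T y⟫‖ ≤ (⟪x, T x⟫).re + (⟪y, T y⟫).re := by
  obtain ⟨c, hc, hcm⟩ := Complex.exists_norm_eq_mul_self ⟪x, T y⟫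
  have hcc : conj c * c = 1 := by rw [Complex.conj_mul', hc]; norm_num
  have hswap : ⟪y, T x⟫ = conj ⟪x, T y⟫ := by rw [← hT.isSymmetric, inner_conj_symm]
  have hexpand : ⟪x - c • y, T (x - c • y)⟫ = ⟪x, T x⟫ + ⟪y, T y⟫ - 2 * ‖⟪x, T y⟫‖ := by
    simp only [map_sub, map_smul, inner_sub_left, inner_sub_right, inner_smul_left,
      inner_smul_right, hswap]
    have hconj : conj c * conj ⟪x, T y⟫ = ‖⟪x, T y⟫‖ := by
      rw [← map_mul, ← hcm, Complex.conj_ofReal]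
    linear_combination ⟪y, T y⟫ * hcc + hcm - hconj
  have := hT.re_inner_nonneg_right (x - c • y)
  rw [hexpand] at this
  simpa using this

namespace IsDensity

variable {ρ : E →ₗ[ℂ] E}

lemma isPositive (hρ : IsDensity ρ) : ρ.IsPositive :=
  ⟨hρ.1, fun x => hρ.1 x x ▸ hρ.2.1 x⟩

lemma sum_re_inner_basis [Fintype κ] (hρ : IsDensity ρ) (c : OrthonormalBasis κ ℂ E) :
    ∑ i, (⟪c i, ρ (c i)⟫).re = 1 := by
  simpa [← Complex.re_sum, ← ρ.trace_eq_sum_inner c] using congrArg Complex.re hρ.2.2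

lemma re_inner_basis_le_one [Fintype κ] (hρ : IsDensity ρ) (c : OrthonormalBasis κ ℂ E) (i : κ) :
    (⟪c i, ρ (c i)⟫).re ≤ 1 :=
  hρ.sum_re_inner_basis c ▸
    Finset.single_le_sum (fun j _ => hρ.2.1 (c j)) (Finset.mem_univ i)

lemma norm_inner_basis_le_one [Fintype κ] (hρ : IsDensity ρ) (c : OrthonormalBasis κ ℂ E)
    (i : κ) : ‖⟪c i, ρ (c i)⟫‖ ≤ 1 := by
  rw [← hρ.1.coe_re_inner_self_apply, RCLike.norm_ofReal]
  exact (abs_of_nonneg (hρ.2.1 (c i))).trans_le (hρ.re_inner_basis_le_one c i)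

lemma two_mul_norm_inner_le_one (hρ : IsDensity ρ) (c : OrthonormalBasis (Fin 2) ℂ E) :
    2 * ‖⟪c 0, ρ (c 1)⟫‖ ≤ 1 := by
  simpa [← hρ.sum_re_inner_basis c] using hρ.isPositive.two_mul_norm_inner_le (c 0) (c 1)

end IsDensity

lemma sdError_nonneg (a a' : κ → E) (ρ : E →ₗ[ℂ] E) : 0 ≤ sdError a a' ρ :=
  Real.iSup_nonneg fun _ => norm_nonneg _

lemma sdDist_nonneg [Fintype κ'] (a' : κ' → E) (b : κ → E) (ρ : E →ₗ[ℂ] E) : 0 ≤ sdDist a' b ρ :=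
  Real.iSup_nonneg fun _ => norm_nonneg _

lemma siError_nonneg (a a' : κ → E) : 0 ≤ siError a a' :=
  Real.iSup_nonneg fun ρ => sdError_nonneg a a' ρ.1

lemma siDist_nonneg [Fintype κ'] (a' : κ' → E) (b : κ → E) : 0 ≤ siDist a' b :=
  Real.iSup_nonneg fun ρ => sdDist_nonneg a' b ρ.1

lemma sdError_self (a : κ → E) (ρ : E →ₗ[ℂ] E) : sdError a a ρ = 0 := by
  simp [sdError]

lemma siError_self (a : κ → E) : siError a a = 0 := by
  simp [siError, sdError_self]

lemma siOverall_self [Fintype κ] (a b : κ → E) : siOverall a a b = siDist a b := by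
  simp [siOverall, siDist, sdError_self]

lemma norm_trace_le_sdError [Finite κ] (a a' : κ → E) (ρ : E →ₗ[ℂ] E) (i : κ) :
    ‖trace ℂ E (ρ ∘ₗ (ketbra (a i) - ketbra (a' i)))‖ ≤ sdError a a' ρ :=
  le_ciSup (f := fun j => ‖trace ℂ E (ρ ∘ₗ (ketbra (a j) - ketbra (a' j)))‖)
    (Set.finite_range _).bddAbove i

lemma norm_trace_le_sdDist [Finite κ] [Fintype κ'] (a' : κ' → E) (b : κ → E)
    (ρ : E →ₗ[ℂ] E) (i : κ) : ‖trace ℂ E (ρ ∘ₗ distOp a' b i)‖ ≤ sdDist a' b ρ :=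
  le_ciSup (f := fun j => ‖trace ℂ E (ρ ∘ₗ distOp a' b j)‖)
    (Set.finite_range _).bddAbove i

section Bounded

variable [FiniteDimensional ℂ E] [Fintype κ] [Fintype κ'] {ρ : E →ₗ[ℂ] E}

lemma sdError_le_two (a a' : OrthonormalBasis κ ℂ E) (hρ : IsDensity ρ) :
    sdError a a' ρ ≤ 2 := by
  refine Real.iSup_le (fun i => ?_) zero_le_two
  rw [LinearMap.comp_sub, map_sub, trace_comp_ketbra, trace_comp_ketbra]
  linarith [norm_sub_le ⟪a i, ρ (a i)⟫ ⟪a' i, ρ (a' i)⟫, hρ.norm_inner_basis_le_one a i,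
    hρ.norm_inner_basis_le_one a' i]

lemma sdDist_le_two (a' : OrthonormalBasis κ' ℂ E) (b : OrthonormalBasis κ ℂ E)
    (hρ : IsDensity ρ) : sdDist a' b ρ ≤ 2 := by
  refine Real.iSup_le (fun i => ?_) zero_le_two
  have hsum : ‖∑ j, (‖⟪a' j, b i⟫‖ ^ 2 : ℂ) * ⟪a' j, ρ (a' j)⟫‖ ≤ 1 := calc
    _ ≤ ∑ j, ‖⟪a' j, b i⟫‖ ^ 2 * 1 := by
      refine (norm_sum_le _ _).trans (Finset.sum_le_sum fun j _ => ?_)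
      rw [norm_mul, norm_pow, Complex.norm_real, norm_norm]
      gcongr
      exact hρ.norm_inner_basis_le_one a' j
    _ = 1 := by simp [a'.sum_sq_norm_inner_right (b i)]
  rw [trace_comp_distOp]
  linarith [norm_sub_le ⟪b i, ρ (b i)⟫ (∑ j, (‖⟪a' j, b i⟫‖ ^ 2 : ℂ) * ⟪a' j, ρ (a' j)⟫),
    hρ.norm_inner_basis_le_one b i]

lemma sdError_le_siError (a a' : OrthonormalBasis κ ℂ E) (hρ : IsDensity ρ) :
    sdError a a' ρ ≤ siError a a' :=
  le_ciSup (f := fun σ : {σ : E →ₗ[ℂ] E // IsDensity σ} => sdError a a' σ.1)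
    ⟨2, by rintro _ ⟨σ, rfl⟩; exact sdError_le_two a a' σ.2⟩ ⟨ρ, hρ⟩

lemma sdDist_le_siDist (a' : OrthonormalBasis κ' ℂ E) (b : OrthonormalBasis κ ℂ E)
    (hρ : IsDensity ρ) : sdDist a' b ρ ≤ siDist a' b :=
  le_ciSup (f := fun σ : {σ : E →ₗ[ℂ] E // IsDensity σ} => sdDist a' b σ.1)
    ⟨2, by rintro _ ⟨σ, rfl⟩; exact sdDist_le_two a' b σ.2⟩ ⟨ρ, hρ⟩

lemma sdError_add_sdDist_le_siOverall (a a' b : OrthonormalBasis κ ℂ E) (hρ : IsDensity ρ) :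
    sdError a a' ρ + sdDist a' b ρ ≤ siOverall a a' b :=
  le_ciSup (f := fun σ : {σ : E →ₗ[ℂ] E // IsDensity σ} => sdError a a' σ.1 + sdDist a' b σ.1)
    ⟨4, by
      rintro _ ⟨σ, rfl⟩
      linarith [sdError_le_two a a' σ.2, sdDist_le_two a' b σ.2]⟩ ⟨ρ, hρ⟩

lemma siOverall_le_siError_add_siDist (a a' b : OrthonormalBasis κ ℂ E) :
    siOverall a a' b ≤ siError a a' + siDist a' b :=
  Real.iSup_le (fun σ => add_le_add (sdError_le_siError a a' σ.2) (sdDist_le_siDist a' b σ.2))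
    (add_nonneg (siError_nonneg a a') (siDist_nonneg a' b))

end Bounded

end General

section Qubit

variable {E : Type*} [NormedAddCommGroup E] [InnerProductSpace ℂ E] {κ : Type*}

lemma OrthonormalBasis.sq_norm_inner_add_sq_norm_inner (c : OrthonormalBasis (Fin 2) ℂ E)
    (v : E) : ‖⟪c 0, v⟫‖ ^ 2 + ‖⟪c 1, v⟫‖ ^ 2 = ‖v‖ ^ 2 := by
  simpa [Fin.sum_univ_two] using c.sum_sq_norm_inner_right v

lemma LinearMap.IsSymmetric.inner_apply_self_eq_fin_two {T : E →ₗ[ℂ] E} (hT : T.IsSymmetric)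
    (c : OrthonormalBasis (Fin 2) ℂ E) (v : E) :
    ⟪v, T v⟫ = (‖⟪c 0, v⟫‖ ^ 2 : ℂ) * ⟪c 0, T (c 0)⟫ + (‖⟪c 1, v⟫‖ ^ 2 : ℂ) * ⟪c 1, T (c 1)⟫
      + 2 * ((conj ⟪c 0, v⟫ * ⟪c 1, v⟫ * ⟪c 0, T (c 1)⟫).re : ℂ) := by
  have hv : v = ⟪c 0, v⟫ • c 0 + ⟪c 1, v⟫ • c 1 := by
    simpa [Fin.sum_univ_two] using (c.sum_repr' v).symm
  have hswap : ⟪c 1, T (c 0)⟫ = conj ⟪c 0, T (c 1)⟫ := by rw [← hT, inner_conj_symm]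
  have hre := Complex.add_conj (conj ⟪c 0, v⟫ * ⟪c 1, v⟫ * ⟪c 0, T (c 1)⟫)
  push_cast at hre
  conv_lhs => rw [hv]
  simp only [map_add, map_smul, inner_add_left, inner_add_right, inner_smul_left,
    inner_smul_right, hswap]
  simp only [map_mul, Complex.conj_conj] at hre
  linear_combination ⟪c 0, T (c 0)⟫ * Complex.conj_mul' ⟪c 0, v⟫
    + ⟪c 1, T (c 1)⟫ * Complex.conj_mul' ⟪c 1, v⟫ + hre

variable [FiniteDimensional ℂ E] {ρ : E →ₗ[ℂ] E}

lemma trace_comp_distOp_fin_two (hρ : ρ.IsSymmetric) (c : OrthonormalBasis (Fin 2) ℂ E)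
    (b : κ → E) (i : κ) :
    trace ℂ E (ρ ∘ₗ distOp c b i)
      = 2 * ((conj ⟪c 0, b i⟫ * ⟪c 1, b i⟫ * ⟪c 0, ρ (c 1)⟫).re : ℂ) := by
  rw [trace_comp_distOp, Fin.sum_univ_two, hρ.inner_apply_self_eq_fin_two c]
  ring

lemma trace_comp_distOp_one_fin_two (T : E →ₗ[ℂ] E) (a b : OrthonormalBasis (Fin 2) ℂ E) :
    trace ℂ E (T ∘ₗ distOp a b 1) = -trace ℂ E (T ∘ₗ distOp a b 0) :=
  eq_neg_of_add_eq_zero_right (by simpa [Fin.sum_univ_two] using sum_trace_comp_distOp T a b)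

lemma norm_trace_comp_distOp_fin_two_le (hρ : IsDensity ρ) (c : OrthonormalBasis (Fin 2) ℂ E)
    (b : κ → E) (i : κ) :
    ‖trace ℂ E (ρ ∘ₗ distOp c b i)‖ ≤ ‖⟪c 0, b i⟫‖ * ‖⟪c 1, b i⟫‖ := by
  have hoff := hρ.two_mul_norm_inner_le_one c
  rw [trace_comp_distOp_fin_two hρ.1]
  calc ‖2 * ((conj ⟪c 0, b i⟫ * ⟪c 1, b i⟫ * ⟪c 0, ρ (c 1)⟫).re : ℂ)‖
      ≤ 2 * ‖conj ⟪c 0, b i⟫ * ⟪c 1, b i⟫ * ⟪c 0, ρ (c 1)⟫‖ := by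
        rw [norm_mul, Complex.norm_two, Complex.norm_real, Real.norm_eq_abs]
        gcongr
        exact Complex.abs_re_le_norm _
    _ = ‖⟪c 0, b i⟫‖ * ‖⟪c 1, b i⟫‖ * (2 * ‖⟪c 0, ρ (c 1)⟫‖) := by
        simp only [norm_mul, RCLike.norm_conj]
        ring
    _ ≤ ‖⟪c 0, b i⟫‖ * ‖⟪c 1, b i⟫‖ := by
        nlinarith [mul_nonneg (norm_nonneg ⟪c 0, b i⟫) (norm_nonneg ⟪c 1, b i⟫)]

lemma exists_isDensity_fin_two (c : OrthonormalBasis (Fin 2) ℂ E) {z : ℂ} (hz : ‖z‖ = 1) :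
    ∃ ρ : E →ₗ[ℂ] E, IsDensity ρ ∧ (∀ i, ⟪c i, ρ (c i)⟫ = 1 / 2) ∧ ⟪c 0, ρ (c 1)⟫ = z / 2 := by
  set s : ℝ := (√2)⁻¹
  have hs : s ^ 2 = 1 / 2 := by simp [s, inv_pow]
  set v : E := (s : ℂ) • (c 0 + conj z • c 1)
  have h0 : ⟪c 0, v⟫ = s := by simp [v, c.inner_eq_ite]
  have h1 : ⟪c 1, v⟫ = s * conj z := by simp [v, c.inner_eq_ite]
  have hv : ‖v‖ = 1 := by
    have := c.sq_norm_inner_add_sq_norm_inner v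
    rw [h0, h1, norm_mul, RCLike.norm_conj, hz, Complex.norm_real, Real.norm_eq_abs, mul_one,
      sq_abs, hs] at this
    nlinarith [norm_nonneg v]
  have hz' : conj z * z = 1 := by rw [Complex.conj_mul', hz]; norm_num
  have hsC : (s : ℂ) ^ 2 = 1 / 2 := by rw [← Complex.ofReal_pow, hs]; norm_num
  have hρ (i j : Fin 2) : ⟪c i, ketbra v (c j)⟫ = conj ⟪c j, v⟫ * ⟪c i, v⟫ := by
    rw [ketbra_apply, inner_smul_right, inner_conj_symm]
  refine ⟨ketbra v, isDensity_ketbra hv, Fin.forall_fin_two.2 ⟨?_, ?_⟩, ?_⟩ <;>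
    simp only [hρ, h0, h1, map_mul, Complex.conj_ofReal, Complex.conj_conj]
  · linear_combination hsC
  · linear_combination (s : ℂ) ^ 2 * hz' + hsC
  · linear_combination z * hsC

lemma exists_isDensity_trace_comp_distOp_eq (a : OrthonormalBasis (Fin 2) ℂ E) (b : κ → E)
    (i : κ) :
    ∃ ρ : E →ₗ[ℂ] E, IsDensity ρ ∧ (∀ j, ⟪a j, ρ (a j)⟫ = 1 / 2) ∧
      ‖trace ℂ E (ρ ∘ₗ distOp a b i)‖ = ‖⟪a 0, b i⟫‖ * ‖⟪a 1, b i⟫‖ := by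
  obtain ⟨z, hz, hzw⟩ := Complex.exists_norm_eq_mul_self (conj ⟪a 0, b i⟫ * ⟪a 1, b i⟫)
  obtain ⟨ρ, hρ, hdiag, hoff⟩ := exists_isDensity_fin_two a hz
  refine ⟨ρ, hρ, hdiag, ?_⟩
  rw [trace_comp_distOp_fin_two hρ.1, hoff, mul_div_assoc', mul_comm _ z, ← hzw,
    Complex.div_ofNat_re, Complex.ofReal_re, Complex.ofReal_div, Complex.ofReal_ofNat,
    mul_div_cancel₀ _ two_ne_zero, Complex.norm_real, norm_norm, norm_mul, RCLike.norm_conj]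

lemma norm_trace_comp_distOp_le_add (hρ : IsDensity ρ) {a : OrthonormalBasis (Fin 2) ℂ E}
    (hdiag : ∀ j, ⟪a j, ρ (a j)⟫ = 1 / 2) (a' : OrthonormalBasis (Fin 2) ℂ E) {b : κ → E}
    {i : κ} (hb : ‖b i‖ = 1) :
    ‖trace ℂ E (ρ ∘ₗ distOp a b i)‖
      ≤ ‖trace ℂ E (ρ ∘ₗ (ketbra (a 0) - ketbra (a' 0)))‖ + ‖trace ℂ E (ρ ∘ₗ distOp a' b i)‖ := by
  have hnorm_sq (c : OrthonormalBasis (Fin 2) ℂ E) :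
      ‖⟪c 0, b i⟫‖ ^ 2 + ‖⟪c 1, b i⟫‖ ^ 2 = 1 := by
    rw [c.sq_norm_inner_add_sq_norm_inner, hb, one_pow]
  have hnorm_sqC (c : OrthonormalBasis (Fin 2) ℂ E) :
      (‖⟪c 0, b i⟫‖ ^ 2 + ‖⟪c 1, b i⟫‖ ^ 2 : ℂ) = 1 := by
    exact_mod_cast hnorm_sq c
  have htrace : ⟪a' 0, ρ (a' 0)⟫ + ⟪a' 1, ρ (a' 1)⟫ = 1 := by
    simpa [Fin.sum_univ_two] using (ρ.trace_eq_sum_inner a').symm.trans hρ.2.2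
  set t := ‖⟪a' 0, b i⟫‖
  have hdiff : trace ℂ E (ρ ∘ₗ distOp a b i) = trace ℂ E (ρ ∘ₗ distOp a' b i)
      + ((1 - 2 * t ^ 2 : ℝ) : ℂ) * trace ℂ E (ρ ∘ₗ (ketbra (a 0) - ketbra (a' 0))) := by
    rw [trace_comp_distOp, trace_comp_distOp, Fin.sum_univ_two, Fin.sum_univ_two, hdiag, hdiag,
      LinearMap.comp_sub, map_sub, trace_comp_ketbra, trace_comp_ketbra, hdiag]
    push_cast
    linear_combination (-1 / 2 : ℂ) * hnorm_sqC a + (1 - ⟪a' 0, ρ (a' 0)⟫) * hnorm_sqC a'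
      + (‖⟪a' 1, b i⟫‖ : ℂ) ^ 2 * htrace
  have ht : |1 - 2 * t ^ 2| ≤ 1 := by
    have := hnorm_sq a'
    exact abs_le.2 ⟨by nlinarith [sq_nonneg ‖⟪a' 1, b i⟫‖], by nlinarith [sq_nonneg t]⟩
  rw [hdiff]
  refine (norm_add_le _ _).trans ?_
  rw [norm_mul, Complex.norm_real, Real.norm_eq_abs, add_comm]
  gcongr
  exact mul_le_of_le_one_left (norm_nonneg _) ht

lemma siDist_fin_two (a b : OrthonormalBasis (Fin 2) ℂ E) :
    siDist a b = ‖⟪a 0, b 0⟫‖ * ‖⟪a 1, b 0⟫‖ := by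
  have hbound (ρ : E →ₗ[ℂ] E) (hρ : IsDensity ρ) : sdDist a b ρ ≤ ‖⟪a 0, b 0⟫‖ * ‖⟪a 1, b 0⟫‖ :=
    Real.iSup_le (Fin.forall_fin_two.2 ⟨norm_trace_comp_distOp_fin_two_le hρ a b 0, by
      rw [trace_comp_distOp_one_fin_two, norm_neg]
      exact norm_trace_comp_distOp_fin_two_le hρ a b 0⟩) (by positivity)
  obtain ⟨ρ, hρ, -, htrace⟩ := exists_isDensity_trace_comp_distOp_eq a b 0
  refine le_antisymm (Real.iSup_le (fun σ => hbound σ.1 σ.2) (by positivity)) ?_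
  calc ‖⟪a 0, b 0⟫‖ * ‖⟪a 1, b 0⟫‖ = ‖trace ℂ E (ρ ∘ₗ distOp a b 0)‖ := htrace.symm
    _ ≤ sdDist a b ρ := norm_trace_le_sdDist a b ρ 0
    _ ≤ siDist a b := sdDist_le_siDist a b hρ

lemma le_siOverall_fin_two (a a' b : OrthonormalBasis (Fin 2) ℂ E) :
    ‖⟪a 0, b 0⟫‖ * ‖⟪a 1, b 0⟫‖ ≤ siOverall a a' b := by
  obtain ⟨ρ, hρ, hdiag, htrace⟩ := exists_isDensity_trace_comp_distOp_eq a b 0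
  calc ‖⟪a 0, b 0⟫‖ * ‖⟪a 1, b 0⟫‖ = ‖trace ℂ E (ρ ∘ₗ distOp a b 0)‖ := htrace.symm
    _ ≤ ‖trace ℂ E (ρ ∘ₗ (ketbra (a 0) - ketbra (a' 0)))‖ + ‖trace ℂ E (ρ ∘ₗ distOp a' b 0)‖ :=
      norm_trace_comp_distOp_le_add hρ hdiag a' (b.orthonormal.1 0)
    _ ≤ sdError a a' ρ + sdDist a' b ρ :=
      add_le_add (norm_trace_le_sdError a a' ρ 0) (norm_trace_le_sdDist a' b ρ 0)
    _ ≤ siOverall a a' b := sdError_add_sdDist_le_siOverall a a' b hρ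

end Qubit

/-- in dimension 2 the trade-off lower bound is sharp and attained at `𝒜' = 𝒜`. -/
theorem qubit_tradeoff_sharp (a b : OrthonormalBasis (Fin 2) ℂ H) :
    ((⨅ a' : OrthonormalBasis (Fin 2) ℂ H, (siError (⇑a) (⇑a') + siDist (⇑a') (⇑b)))
        = ‖⟪a 0, b 0⟫‖ * Real.sqrt (1 - ‖⟪a 0, b 0⟫‖ ^ 2)) ∧
    ((⨅ a' : OrthonormalBasis (Fin 2) ℂ H, siOverall (⇑a) (⇑a') (⇑b))
        = ‖⟪a 0, b 0⟫‖ * Real.sqrt (1 - ‖⟪a 0, b 0⟫‖ ^ 2)) ∧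
    (siError (⇑a) (⇑a) + siDist (⇑a) (⇑b)
        = ‖⟪a 0, b 0⟫‖ * Real.sqrt (1 - ‖⟪a 0, b 0⟫‖ ^ 2)) ∧
    (siOverall (⇑a) (⇑a) (⇑b)
        = ‖⟪a 0, b 0⟫‖ * Real.sqrt (1 - ‖⟪a 0, b 0⟫‖ ^ 2)) := by
  have hsqrt : √(1 - ‖⟪a 0, b 0⟫‖ ^ 2) = ‖⟪a 1, b 0⟫‖ := by
    have hparseval := a.sq_norm_inner_add_sq_norm_inner (b 0)
    rw [b.orthonormal.1 0, one_pow] at hparseval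
    rw [← hparseval, add_sub_cancel_left, Real.sqrt_sq (norm_nonneg _)]
  have hself : siError a a + siDist a b = ‖⟪a 0, b 0⟫‖ * ‖⟪a 1, b 0⟫‖ := by
    rw [siError_self, siDist_fin_two, zero_add]
  have hΔself : siOverall a a b = ‖⟪a 0, b 0⟫‖ * ‖⟪a 1, b 0⟫‖ := by
    rw [siOverall_self, siDist_fin_two]
  rw [hsqrt]
  refine ⟨IsLeast.csInf_eq ⟨⟨a, hself⟩, ?_⟩, IsLeast.csInf_eq ⟨⟨a, hΔself⟩, ?_⟩, hself, hΔself⟩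
  · rintro _ ⟨a', rfl⟩
    exact (le_siOverall_fin_two a a' b).trans (siOverall_le_siError_add_siDist a a' b)
  · rintro _ ⟨a', rfl⟩
    exact le_siOverall_fin_two a a' b
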